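/- arXiv:2308.01228 — 2 statements merged into one kernel-verified Lean document; each statement's English description precedes it below -/
import Mathlib

section
/- Let ρ ∈ (0, 1/2). Suppose Z : (0, ∞) → ℝ is measurable, nonnegative, and square-integrable on (0, ∞), and there exist constants C > 0 and t* ≥ 0 such that ∫_t^∞ Z(τ)² dτ ≤ C · Z(t)^{1/(1-ρ)} for almost all t ≥ t*. Then Z is integrable on (0, ∞). -/
open MeasureTheory Set Filter Topology

/-!
Write `H t = ∫_t^∞ Z²` and `β = 2 (1 - ρ) ∈ (1, 2)`. The hypothesis says `-H' = Z² ≥ (H / C)^β`,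
a differential inequality forcing `H t = O(t^(-1/(β-1)))`. We run it on the dyadic points
`t₀ + 2^k`: integrating over `(t₀ + 2^k, t₀ + 2^(k+1)]` gives
`2^k H(t₀ + 2^(k+1))^β ≤ C^β H(t₀ + 2^k)`, hence `H(t₀ + 2^k) ≤ M 2^(-k/(β-1))`.
By Cauchy–Schwarz the integral of `|Z|` over the `k`-th dyadic block is at most
`√(2^k H(t₀ + 2^k))`, which decays geometrically since `1/(β-1) > 1`; on the bounded part
`(0, t₀ + 1]`, `Z` is integrable because `Z²` is.
-/

theorem div_rpow_mul_le_rpow_of_le_mul_rpow_inv {y z C p q : ℝ} (hy : 0 ≤ y) (hz : 0 ≤ z)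
    (hC : 0 < C) (hp : 0 ≤ p) (hq : 0 < q) (h : y ≤ C * z ^ q⁻¹) : (y / C) ^ (p * q) ≤ z ^ p :=
  calc (y / C) ^ (p * q) = ((y / C) ^ q) ^ p := by rw [mul_comm, Real.rpow_mul (by positivity)]
    _ ≤ ((z ^ q⁻¹) ^ q) ^ p := by gcongr; rwa [div_le_iff₀' hC]
    _ = z ^ p := by rw [Real.rpow_inv_rpow hz hq.ne']

section
variable {α : Type*} [MeasurableSpace α] {μ : Measure α} {f : α → ℝ}

theorem setIntegral_abs_le_sqrt_mul_setIntegral_sq {s : Set α} (hs : μ s ≠ ⊤)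
    (hf : AEStronglyMeasurable f (μ.restrict s)) (hsq : IntegrableOn (fun x => f x ^ 2) s μ) :
    ∫ x in s, |f x| ∂μ ≤ √(μ.real s * ∫ x in s, f x ^ 2 ∂μ) := by
  have : IsFiniteMeasure (μ.restrict s) := isFiniteMeasure_restrict.mpr hs
  have hL2 : MemLp f 2 (μ.restrict s) := (memLp_two_iff_integrable_sq hf).mpr hsq
  have holder := integral_mul_le_Lp_mul_Lq_of_nonneg Real.HolderConjugate.two_two
    (f := fun x => |f x|) (g := fun _ => (1 : ℝ)) (ae_of_all _ fun x => abs_nonneg (f x))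
    (ae_of_all _ fun _ => zero_le_one) (by rw [ENNReal.ofReal_ofNat]; exact hL2.abs)
    (by simpa using memLp_const 1)
  simp only [mul_one, one_pow, integral_const, smul_eq_mul, Real.rpow_two, sq_abs,
    measureReal_restrict_apply_univ] at holder
  rw [Real.sqrt_mul measureReal_nonneg, mul_comm, Real.sqrt_eq_rpow, Real.sqrt_eq_rpow]
  exact holder

theorem integrableOn_of_integrableOn_sq {s : Set α} (hs : μ s ≠ ⊤)
    (hf : AEStronglyMeasurable f (μ.restrict s)) (hsq : IntegrableOn (fun x => f x ^ 2) s μ) :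
    IntegrableOn f s μ :=
  have : IsFiniteMeasure (μ.restrict s) := isFiniteMeasure_restrict.mpr hs
  ((memLp_two_iff_integrable_sq hf).mpr hsq).integrable one_le_two

end

theorem sub_mul_le_setIntegral_Ioi {g : ℝ → ℝ} {t s c : ℝ} (hts : t ≤ s)
    (hg : IntegrableOn g (Ioi t)) (hg0 : 0 ≤ᵐ[volume.restrict (Ioi t)] g)
    (hc : ∀ᵐ x, x ∈ Ioc t s → c ≤ g x) : (s - t) * c ≤ ∫ x in Ioi t, g x :=
  calc (s - t) * c = ∫ _ in Ioc t s, c := by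
        rw [setIntegral_const, Real.volume_real_Ioc_of_le hts, smul_eq_mul]
    _ ≤ ∫ x in Ioc t s, g x :=
        setIntegral_mono_ae_restrict (integrableOn_const measure_Ioc_lt_top.ne)
          (hg.mono_set Ioc_subset_Ioi_self) ((ae_restrict_iff' measurableSet_Ioc).mpr hc)
    _ ≤ ∫ x in Ioi t, g x := setIntegral_mono_set hg hg0 Ioc_subset_Ioi_self.eventuallyLE

theorem sub_mul_rpow_setIntegral_Ioi_le {g : ℝ → ℝ} {t₀ C β : ℝ} (hg : IntegrableOn g (Ioi t₀))
    (hg0 : ∀ x, 0 ≤ g x) (hC : 0 ≤ C) (hβ : 0 ≤ β)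
    (hgC : ∀ᵐ x, t₀ < x → ((∫ y in Ioi x, g y) / C) ^ β ≤ g x) {t s : ℝ} (ht : t₀ ≤ t)
    (hts : t ≤ s) : (s - t) * ((∫ y in Ioi s, g y) / C) ^ β ≤ ∫ y in Ioi t, g y := by
  have hg_t : IntegrableOn g (Ioi t) := hg.mono_set (Ioi_subset_Ioi ht)
  refine sub_mul_le_setIntegral_Ioi hts hg_t (ae_of_all _ hg0) ?_
  filter_upwards [hgC] with x hx hxts
  refine le_trans ?_ (hx (ht.trans_lt hxts.1))
  refine Real.rpow_le_rpow (div_nonneg (setIntegral_nonneg measurableSet_Ioi fun y _ => hg0 y) hC)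
    (div_le_div_of_nonneg_right ?_ hC) hβ
  exact setIntegral_mono_set (hg_t.mono_set (Ioi_subset_Ioi hxts.1.le)) (ae_of_all _ hg0)
    (Ioi_subset_Ioi hxts.2).eventuallyLE

theorem exists_le_mul_pow_of_pow_mul_rpow_succ_le {a : ℕ → ℝ} {b K β : ℝ} (ha : ∀ k, 0 ≤ a k)
    (hb : 0 < b) (hK : 0 < K) (hβ : 1 < β) (h : ∀ k, b ^ k * a (k + 1) ^ β ≤ K * a k) :
    ∃ M, ∀ k, a k ≤ M * (b ^ (-(β - 1)⁻¹)) ^ k := by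
  set r := b ^ (-(β - 1)⁻¹)
  have hr : 0 < r := Real.rpow_pos_of_pos hb _
  have hrβ : r ^ β = r / b := by
    rw [show β = 1 + (β - 1) by ring, Real.rpow_add hr, Real.rpow_one, ← Real.rpow_mul hb.le,
      neg_mul, inv_mul_cancel₀ (by linarith), Real.rpow_neg_one, div_eq_mul_inv]
  set M := max (a 0) ((K / r ^ β) ^ (β - 1)⁻¹)
  have hM : 0 < M := lt_max_of_lt_right (by positivity)
  have hKM : K * M ≤ M ^ β * r ^ β := by
    have hMpow : K / r ^ β ≤ M ^ (β - 1) := by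
      calc K / r ^ β = ((K / r ^ β) ^ (β - 1)⁻¹) ^ (β - 1) :=
            (Real.rpow_inv_rpow (by positivity) (by linarith)).symm
        _ ≤ M ^ (β - 1) := by gcongr; exact le_max_right _ _
    rw [div_le_iff₀ (by positivity)] at hMpow
    calc K * M = K * M ^ (1 : ℝ) := by rw [Real.rpow_one]
      _ ≤ M ^ (β - 1) * r ^ β * M ^ (1 : ℝ) := by gcongr
      _ = M ^ β * r ^ β := by rw [mul_right_comm, ← Real.rpow_add hM]; ring_nf
  refine ⟨M, fun k => ?_⟩
  induction k with
  | zero => simp [M]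
  | succ k ih =>
    have key : a (k + 1) ^ β ≤ (M * r ^ (k + 1)) ^ β := by
      calc a (k + 1) ^ β ≤ K * a k / b ^ k := by
            rw [le_div_iff₀ (by positivity)]; linarith [h k]
        _ ≤ K * (M * r ^ k) / b ^ k := by gcongr
        _ = K * M * (r ^ β) ^ k := by rw [hrβ, div_pow]; field_simp
        _ ≤ M ^ β * r ^ β * (r ^ β) ^ k := by gcongr
        _ = (M * r ^ (k + 1)) ^ β := by
            rw [Real.mul_rpow hM.le (by positivity), ← Real.rpow_pow_comm hr.le, pow_succ]; ring
    exact (Real.rpow_le_rpow_iff (ha _) (by positivity) (by linarith)).mp key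

theorem exists_setIntegral_Ioi_le_geometric {g : ℝ → ℝ} {t₀ C β : ℝ} (hg : IntegrableOn g (Ioi t₀))
    (hg0 : ∀ x, 0 ≤ g x) (hC : 0 < C) (hβ : 1 < β)
    (hgC : ∀ᵐ x, t₀ < x → ((∫ y in Ioi x, g y) / C) ^ β ≤ g x) :
    ∃ M, ∀ k : ℕ, ∫ y in Ioi (t₀ + 2 ^ k), g y ≤ M * ((2 : ℝ) ^ (-(β - 1)⁻¹)) ^ k := by
  have htail_nonneg (t : ℝ) : 0 ≤ ∫ y in Ioi t, g y :=
    setIntegral_nonneg measurableSet_Ioi fun y _ => hg0 y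
  refine exists_le_mul_pow_of_pow_mul_rpow_succ_le (K := C ^ β) (fun k => htail_nonneg _) two_pos
    (by positivity) hβ fun k => ?_
  have h := sub_mul_rpow_setIntegral_Ioi_le (t := t₀ + 2 ^ k) (s := t₀ + 2 ^ (k + 1)) hg hg0 hC.le
    (by linarith) hgC (le_add_of_nonneg_right (by positivity)) (by gcongr <;> norm_num)
  have hlen : t₀ + 2 ^ (k + 1) - (t₀ + 2 ^ k) = (2 : ℝ) ^ k := by ring
  rwa [hlen, Real.div_rpow (htail_nonneg _) hC.le, ← mul_div_assoc, div_le_iff₀ (by positivity),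
    mul_comm _ (C ^ β)] at h

theorem integrableOn_Ioi_of_summable_intervalIntegral_norm {E : Type*} [NormedAddCommGroup E]
    {f : ℝ → E} {T : ℕ → ℝ} (hT : Monotone T) (hT_top : Tendsto T atTop atTop)
    (hf : ∀ k, IntegrableOn f (Ioc (T k) (T (k + 1))))
    (hsum : Summable fun k => ∫ x in T k..T (k + 1), ‖f x‖) : IntegrableOn f (Ioi (T 0)) := by
  have hblock (k : ℕ) : IntervalIntegrable f volume (T k) (T (k + 1)) :=
    (intervalIntegrable_iff_integrableOn_Ioc_of_le (hT k.le_succ)).mpr (hf k)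
  have hinit (n : ℕ) : IntervalIntegrable f volume (T 0) (T n) :=
    IntervalIntegrable.trans_iterate fun k _ => hblock k
  refine integrableOn_Ioi_of_intervalIntegral_norm_bounded (∑' k, ∫ x in T k..T (k + 1), ‖f x‖)
    (T 0) (fun n => (intervalIntegrable_iff_integrableOn_Ioc_of_le (hT n.zero_le)).mp (hinit n))
    hT_top (Eventually.of_forall fun n => ?_)
  rw [← intervalIntegral.sum_integral_adjacent_intervals fun k _ => (hblock k).norm]
  exact hsum.sum_le_tsum _ fun k _ =>
    intervalIntegral.integral_nonneg (hT k.le_succ) fun _ _ => norm_nonneg _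

theorem integrableOn_Ioi_of_setIntegral_sq_Ioi_le_geometric {f : ℝ → ℝ} {t₀ M r : ℝ}
    (hf : AEStronglyMeasurable f) (hsq : IntegrableOn (fun x => f x ^ 2) (Ioi t₀))
    (hr : 0 ≤ r) (hr2 : 2 * r < 1)
    (htail : ∀ k : ℕ, ∫ x in Ioi (t₀ + 2 ^ k), f x ^ 2 ≤ M * r ^ k) :
    IntegrableOn f (Ioi (t₀ + 1)) := by
  set T : ℕ → ℝ := fun k => t₀ + 2 ^ k
  have hT : Monotone T := fun m n hmn => by
    simpa [T] using pow_le_pow_right₀ one_le_two hmn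
  have hT_top : Tendsto T atTop atTop :=
    tendsto_atTop_add_const_left _ _ (tendsto_pow_atTop_atTop_of_one_lt one_lt_two)
  have hsub (k : ℕ) : Ioc (T k) (T (k + 1)) ⊆ Ioi t₀ := fun x hx =>
    lt_trans (by simp [T]) hx.1
  have hvol (k : ℕ) : volume.real (Ioc (T k) (T (k + 1))) = 2 ^ k := by
    rw [Real.volume_real_Ioc_of_le (hT k.le_succ)]; simp only [T, pow_succ]; ring
  have hsq_block (k : ℕ) : ∫ x in Ioc (T k) (T (k + 1)), f x ^ 2 ≤ M * r ^ k :=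
    (setIntegral_mono_set (hsq.mono_set (Ioi_subset_Ioi (le_add_of_nonneg_right (by positivity))))
      (ae_of_all _ fun x => sq_nonneg (f x)) Ioc_subset_Ioi_self.eventuallyLE).trans (htail k)
  have hint (k : ℕ) : IntegrableOn f (Ioc (T k) (T (k + 1))) :=
    integrableOn_of_integrableOn_sq measure_Ioc_lt_top.ne hf.restrict (hsq.mono_set (hsub k))
  have hbound (k : ℕ) : ∫ x in T k..T (k + 1), ‖f x‖ ≤ √M * √(2 * r) ^ k := by
    rw [intervalIntegral.integral_of_le (hT k.le_succ)]
    calc ∫ x in Ioc (T k) (T (k + 1)), ‖f x‖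
        ≤ √(volume.real (Ioc (T k) (T (k + 1))) * ∫ x in Ioc (T k) (T (k + 1)), f x ^ 2) := by
          simpa [Real.norm_eq_abs] using setIntegral_abs_le_sqrt_mul_setIntegral_sq
            measure_Ioc_lt_top.ne hf.restrict (hsq.mono_set (hsub k))
      _ ≤ √(2 ^ k * (M * r ^ k)) := by rw [hvol]; gcongr; exact hsq_block k
      _ = √M * √(2 * r) ^ k := by
          rw [← Real.sqrt_sq (pow_nonneg (Real.sqrt_nonneg (2 * r)) k), ← pow_mul, mul_comm k 2,
            pow_mul, Real.sq_sqrt (by positivity), ← Real.sqrt_mul' _ (by positivity), mul_pow]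
          ring_nf
  have hsum : Summable fun k => ∫ x in T k..T (k + 1), ‖f x‖ :=
    .of_nonneg_of_le
      (fun k => intervalIntegral.integral_nonneg (hT k.le_succ) fun _ _ => norm_nonneg _) hbound
      ((summable_geometric_of_lt_one (Real.sqrt_nonneg _)
        ((Real.sqrt_lt' one_pos).mpr (by simpa using hr2))).mul_left √M)
  simpa [T] using integrableOn_Ioi_of_summable_intervalIntegral_norm hT hT_top hint hsum

theorem stmt_0_general (ρ : ℝ) (hρ : ρ ∈ Set.Ioo (0:ℝ) (1/2)) (Z : ℝ → ℝ)
    (hmeas : Measurable Z) (hnn : ∀ t ∈ Set.Ioi (0:ℝ), 0 ≤ Z t)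
    (hL2 : MeasureTheory.IntegrableOn (fun t => Z t ^ 2) (Set.Ioi 0))
    (C tstar : ℝ) (hC : 0 < C)
    (hineq : ∀ᵐ t : ℝ, tstar ≤ t →
      (∫ τ in Set.Ioi t, Z τ ^ 2) ≤ C * Z t ^ ((1:ℝ) / (1 - ρ))) :
    MeasureTheory.IntegrableOn Z (Set.Ioi 0) := by
  obtain ⟨hρ0, hρ2⟩ := hρ
  set t₀ := max tstar 0
  set β := 2 * (1 - ρ)
  have hsq : IntegrableOn (fun t => Z t ^ 2) (Ioi t₀) :=
    hL2.mono_set (Ioi_subset_Ioi (le_max_right _ _))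
  have hZ_sq : ∀ᵐ t, t₀ < t → ((∫ y in Ioi t, Z y ^ 2) / C) ^ β ≤ Z t ^ 2 := by
    filter_upwards [hineq] with t ht ht₀
    have h := div_rpow_mul_le_rpow_of_le_mul_rpow_inv
      (setIntegral_nonneg measurableSet_Ioi fun y _ => sq_nonneg (Z y))
      (hnn t ((le_max_right _ _).trans_lt ht₀)) hC zero_le_two (by linarith)
      (one_div (1 - ρ) ▸ ht ((le_max_left _ _).trans ht₀.le))
    rwa [Real.rpow_two] at h
  obtain ⟨M, hM⟩ := exists_setIntegral_Ioi_le_geometric hsq (fun t => sq_nonneg (Z t)) hC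
    (by linarith) hZ_sq
  have hr2 : 2 * (2 : ℝ) ^ (-(β - 1)⁻¹) < 1 := by
    have h := Real.rpow_lt_rpow_of_exponent_lt one_lt_two
      (neg_lt_neg ((one_lt_inv₀ (by linarith)).mpr (by linarith) : 1 < (β - 1)⁻¹))
    rw [Real.rpow_neg_one] at h
    linarith
  have htail := integrableOn_Ioi_of_setIntegral_sq_Ioi_le_geometric hmeas.aestronglyMeasurable hsq
    (by positivity) hr2 hM
  have hhead : IntegrableOn Z (Ioc 0 (t₀ + 1)) := integrableOn_of_integrableOn_sq
    measure_Ioc_lt_top.ne hmeas.aestronglyMeasurable.restrict (hL2.mono_set Ioc_subset_Ioi_self)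
  rw [← Ioc_union_Ioi_eq_Ioi (by positivity : (0 : ℝ) ≤ t₀ + 1)]
  exact hhead.union htail

theorem stmt_0 (ρ : ℝ) (hρ : ρ ∈ Set.Ioo (0:ℝ) (1/2)) (Z : ℝ → ℝ)
    (hmeas : Measurable Z) (hnn : ∀ t ∈ Set.Ioi (0:ℝ), 0 ≤ Z t)
    (hL2 : MeasureTheory.IntegrableOn (fun t => Z t ^ 2) (Set.Ioi 0))
    (C tstar : ℝ) (hC : 0 < C) (htstar : 0 ≤ tstar)
    (hineq : ∀ᵐ t : ℝ, tstar ≤ t →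
      (∫ τ in Set.Ioi t, Z τ ^ 2) ≤ C * Z t ^ ((1:ℝ) / (1 - ρ))) :
    MeasureTheory.IntegrableOn Z (Set.Ioi 0) :=
  stmt_0_general ρ hρ Z hmeas hnn hL2 C tstar hC hineq
end

section
/- Let G : [t*, ∞) → [0, ∞) be absolutely continuous, let χ ∈ (0, 1/2), α > 1, C, C' > 0, and suppose G'(t) + C·G(t)^{2(1-χ)} ≤ C'·(1+t)^{2(1-χ)(1-2α)} for almost all t ≥ t*. Then there exists K > 0 such that G(t) ≤ K·(1+t)^{-λ₁} for all t ≥ t*, where λ₁ = min{1/(1-2χ), 2α-1}. -/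
/-!
With `p = 2(1-χ)` and `λ = λ₁`, the profile `ψ(t) = K (1+t)^(-λ)` is a supersolution,
`ψ' + C ψ^p ≥ C' (1+t)^(p(1-2α))`, as soon as `λ K + C' ≤ C K^p`: the condition
`λ (p-1) ≤ 1` makes `|ψ'| ∼ (1+t)^(-λ-1)` decay at least as fast as `ψ^p ∼ (1+t)^(-λp)`,
and `λ ≤ 2α-1` does the same for the forcing term. Taking `K` also large enough that
`G(t*) ≤ ψ(t*)`, a comparison argument gives `G ≤ ψ`: after the last time `u` at which
`G ≤ ψ`, the inequality `G > ψ ≥ 0` forces `G' ≤ ψ'` almost everywhere, so `G - ψ` cannot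
become positive.
-/

open MeasureTheory Set Filter

theorem nonpos_of_primitive_of_ae_nonpos_where_pos {F f : ℝ → ℝ} {a b : ℝ} (hab : a ≤ b)
    (hf : IntegrableOn f (Icc a b)) (hF : ∀ t ∈ Icc a b, F t = F a + ∫ τ in a..t, f τ)
    (ha : F a ≤ 0) (hpos : ∀ᵐ t, t ∈ Icc a b → 0 < F t → f t ≤ 0) : F b ≤ 0 := by
  by_contra! hb
  have hFcont : ContinuousOn F (Icc a b) := by
    have hprim := intervalIntegral.continuousOn_primitive_interval (a := a) (b := b)
      (by rwa [uIcc_of_le hab])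
    rw [uIcc_of_le hab] at hprim
    exact (continuousOn_const.add hprim).congr hF
  set A := {t ∈ Icc a b | F t ≤ 0}
  have hAclosed : IsClosed A := isClosed_Icc.isClosed_le hFcont (continuousOn_const (c := 0))
  have hAbdd : BddAbove A := ⟨b, fun t ht => ht.1.2⟩
  set u := sSup A
  have huA : u ∈ A := hAclosed.csSup_mem ⟨a, left_mem_Icc.2 hab, ha⟩ hAbdd
  have hub : u < b := huA.1.2.lt_of_ne fun h => (h ▸ huA.2).not_gt hb
  have hFpos : ∀ t ∈ Ioc u b, 0 < F t := fun t ht => by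
    by_contra! h
    exact ht.1.not_ge (le_csSup hAbdd ⟨⟨huA.1.1.trans ht.1.le, ht.2⟩, h⟩)
  have hint : ∀ t ∈ Icc a b, IntervalIntegrable f volume a t := fun t ht =>
    (intervalIntegrable_iff_integrableOn_Icc_of_le ht.1).2
    (hf.mono_set (Icc_subset_Icc le_rfl ht.2))
  have hdiff : F b - F u = ∫ τ in u..b, f τ := by
    rw [hF b (right_mem_Icc.2 hab), hF u huA.1, ← intervalIntegral.integral_interval_sub_left
      (hint b (right_mem_Icc.2 hab)) (hint u huA.1)]
    ring
  have hnonpos : ∫ τ in u..b, f τ ≤ 0 := by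
    rw [intervalIntegral.integral_of_le hub.le]
    refine integral_nonpos_of_ae ?_
    filter_upwards [ae_restrict_of_ae hpos, ae_restrict_mem measurableSet_Ioc] with t ht htI
    exact ht ⟨huA.1.1.trans htI.1.le, htI.2⟩ (hFpos t htI)
  linarith [huA.2]

theorem le_of_primitive_of_ae_le_deriv_where_lt {G g ψ ψ' : ℝ → ℝ} {a b : ℝ}
    (hab : a ≤ b) (hg : IntegrableOn g (Icc a b))
    (hG : ∀ t ∈ Icc a b, G t = G a + ∫ τ in a..t, g τ)
    (hψ : ∀ t ∈ Icc a b, HasDerivAt ψ (ψ' t) t) (hψ' : ContinuousOn ψ' (Icc a b))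
    (ha : G a ≤ ψ a)
    (hlt : ∀ᵐ t, t ∈ Icc a b → ψ t < G t → g t ≤ ψ' t) : G b ≤ ψ b := by
  have hψ'int : IntegrableOn ψ' (Icc a b) := hψ'.integrableOn_compact isCompact_Icc
  suffices (G - ψ) b ≤ 0 by simpa [sub_nonpos] using this
  refine nonpos_of_primitive_of_ae_nonpos_where_pos (F := G - ψ) (f := g - ψ') hab
    (hg.sub hψ'int) (fun t ht => ?_)
    (sub_nonpos.2 ha) (hlt.mono fun t h ht hpos => by simpa using h ht (by simpa using hpos))
  have hsub : Icc a t ⊆ Icc a b := Icc_subset_Icc le_rfl ht.2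
  have hint {φ : ℝ → ℝ} (h : IntegrableOn φ (Icc a b)) : IntervalIntegrable φ volume a t :=
    (intervalIntegrable_iff_integrableOn_Icc_of_le ht.1).2 (h.mono_set hsub)
  have hFTC : ∫ τ in a..t, ψ' τ = ψ t - ψ a :=
    intervalIntegral.integral_eq_sub_of_hasDerivAt
      (fun x hx => hψ x (hsub (by rwa [uIcc_of_le ht.1] at hx))) (hint hψ'int)
  simp only [Pi.sub_apply]
  rw [intervalIntegral.integral_sub (hint hg) (hint hψ'int), hFTC, hG t ht]
  ring

theorem hasDerivAt_mul_one_add_rpow (K r : ℝ) {t : ℝ} (ht : 0 < 1 + t) :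
    HasDerivAt (fun t => K * (1 + t) ^ r) (r * K * (1 + t) ^ (r - 1)) t := by
  have h := (((hasDerivAt_id t).const_add 1).rpow_const (p := r) (Or.inl ht.ne')).const_mul K
  exact h.congr_deriv (by simp only [id]; ring)

theorem eventually_mul_add_le_mul_rpow {p C : ℝ} (hp : 1 < p) (hC : 0 < C) (a b : ℝ) :
    ∀ᶠ K in atTop, a * K + b ≤ C * K ^ p := by
  filter_upwards [(tendsto_rpow_atTop (sub_pos.2 hp)).eventually_ge_atTop ((|a| + |b|) / C),
    eventually_ge_atTop 1] with K hKp hK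
  have hsplit : K ^ p = K ^ (p - 1) * K := by
    rw [← Real.rpow_add_one (by positivity), sub_add_cancel]
  calc a * K + b ≤ |a| * K + |b| * K := by
        nlinarith [le_abs_self a, le_abs_self b, abs_nonneg b]
    _ = (|a| + |b|) / C * K * C := by field_simp
    _ ≤ K ^ (p - 1) * K * C := by gcongr
    _ = C * K ^ p := by rw [hsplit]; ring

theorem rpow_profile_supersolution {lam p q K C C' x : ℝ} (hx : 1 ≤ x) (hlam : 0 ≤ lam)
    (hK : 0 ≤ K) (hC' : 0 ≤ C') (hlamp : lam * (p - 1) ≤ 1) (hq : q ≤ -lam * p)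
    (hKbig : lam * K + C' ≤ C * K ^ p) :
    C' * x ^ q ≤ -lam * K * x ^ (-lam - 1) + C * (K * x ^ (-lam)) ^ p := by
  have hx0 : 0 ≤ x := zero_le_one.trans hx
  have hdecay : x ^ (-lam - 1) ≤ x ^ (-lam * p) :=
    Real.rpow_le_rpow_of_exponent_le hx (by nlinarith)
  have hforce : x ^ q ≤ x ^ (-lam * p) := Real.rpow_le_rpow_of_exponent_le hx hq
  have hprofile : (K * x ^ (-lam)) ^ p = K ^ p * x ^ (-lam * p) := by
    rw [Real.mul_rpow hK (Real.rpow_nonneg hx0 _), ← Real.rpow_mul hx0]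
  suffices C' * x ^ q + lam * K * x ^ (-lam - 1) ≤ C * (K * x ^ (-lam)) ^ p by linarith
  calc C' * x ^ q + lam * K * x ^ (-lam - 1) ≤ (lam * K + C') * x ^ (-lam * p) := by
        nlinarith [mul_le_mul_of_nonneg_left hdecay (mul_nonneg hlam hK),
          mul_le_mul_of_nonneg_left hforce hC']
    _ ≤ C * K ^ p * x ^ (-lam * p) := by gcongr
    _ = C * (K * x ^ (-lam)) ^ p := by rw [hprofile]; ring

theorem stmt_13_general (tstar χ α C C' : ℝ) (hχ : χ ∈ Set.Ioo (0:ℝ) (1/2)) (hα : 1 < α)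
    (hC : 0 < C) (hC' : 0 < C') (htstar : 0 ≤ tstar)
    (G g : ℝ → ℝ)
    (hloc : ∀ t : ℝ, tstar ≤ t → MeasureTheory.IntegrableOn g (Set.Icc tstar t))
    (hrep : ∀ t : ℝ, tstar ≤ t → G t = G tstar + ∫ τ in tstar..t, g τ)
    (hineq : ∀ᵐ t : ℝ, tstar ≤ t →
      g t + C * G t ^ (2 * (1 - χ)) ≤ C' * (1 + t) ^ (2 * (1 - χ) * (1 - 2 * α))) :
    ∃ K > 0, ∀ t : ℝ, tstar ≤ t →
      G t ≤ K * (1 + t) ^ (-(min (1 / (1 - 2 * χ)) (2 * α - 1))) := by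
  obtain ⟨hχ0, hχ2⟩ := hχ
  set lam := min (1 / (1 - 2 * χ)) (2 * α - 1)
  set p := 2 * (1 - χ)
  have h2χ : 0 < 1 - 2 * χ := by linarith
  have hp : 1 < p := by linarith
  have hlam : 0 < lam := lt_min (by positivity) (by linarith)
  have hlamp : lam * (p - 1) ≤ 1 := by
    have := (le_div_iff₀ h2χ).1 (min_le_left (1 / (1 - 2 * χ)) (2 * α - 1))
    linarith
  have hq : p * (1 - 2 * α) ≤ -lam * p := by
    nlinarith [min_le_right (1 / (1 - 2 * χ)) (2 * α - 1)]
  have hpos : ∀ t, tstar ≤ t → 0 < 1 + t := fun t ht => by linarith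
  have hinit : ∀ᶠ K in atTop, G tstar ≤ K * (1 + tstar) ^ (-lam) :=
    (tendsto_id.atTop_mul_const (Real.rpow_pos_of_pos (hpos tstar le_rfl) _)).eventually_ge_atTop _
  obtain ⟨K, hKpos, hKbig, hKinit⟩ :=
    ((eventually_gt_atTop 0).and ((eventually_mul_add_le_mul_rpow hp hC lam C').and hinit)).exists
  refine ⟨K, hKpos, fun s hs => ?_⟩
  refine le_of_primitive_of_ae_le_deriv_where_lt (ψ := fun t => K * (1 + t) ^ (-lam))
    (ψ' := fun t => -lam * K * (1 + t) ^ (-lam - 1)) hs (hloc s hs) (fun t ht => hrep t ht.1)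
    (fun t ht => hasDerivAt_mul_one_add_rpow K (-lam) (hpos t ht.1))
    (continuousOn_const.mul ((continuousOn_const.add continuousOn_id).rpow_const
      fun t ht => Or.inl (hpos t ht.1).ne')) hKinit ?_
  filter_upwards [hineq] with t ht htI hψG
  have hx : 1 ≤ 1 + t := by linarith [htI.1]
  calc g t ≤ C' * (1 + t) ^ (p * (1 - 2 * α)) - C * G t ^ p := by linarith [ht htI.1]
    _ ≤ C' * (1 + t) ^ (p * (1 - 2 * α)) - C * (K * (1 + t) ^ (-lam)) ^ p := by gcongr
    _ ≤ -lam * K * (1 + t) ^ (-lam - 1) := by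
      linarith [rpow_profile_supersolution hx hlam.le hKpos.le hC'.le hlamp hq hKbig]

theorem stmt_13 (tstar χ α C C' : ℝ) (hχ : χ ∈ Set.Ioo (0:ℝ) (1/2)) (hα : 1 < α)
    (hC : 0 < C) (hC' : 0 < C') (htstar : 0 ≤ tstar)
    (G g : ℝ → ℝ) (hGnn : ∀ t : ℝ, tstar ≤ t → 0 ≤ G t)
    (hloc : ∀ t : ℝ, tstar ≤ t → MeasureTheory.IntegrableOn g (Set.Icc tstar t))
    (hrep : ∀ t : ℝ, tstar ≤ t → G t = G tstar + ∫ τ in tstar..t, g τ)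
    (hineq : ∀ᵐ t : ℝ, tstar ≤ t →
      g t + C * G t ^ (2 * (1 - χ)) ≤ C' * (1 + t) ^ (2 * (1 - χ) * (1 - 2 * α))) :
    ∃ K > 0, ∀ t : ℝ, tstar ≤ t →
      G t ≤ K * (1 + t) ^ (-(min (1 / (1 - 2 * χ)) (2 * α - 1))) :=
  stmt_13_general tstar χ α C C' hχ hα hC hC' htstar G g hloc hrep hineq
end
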